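/- Let G' be a finite acyclic AND/OR graph with root s, cost functions p, d computed from the same heuristic h used by AO*, and a fixed linear order on nodes for tie-breaking. Then every node on the PNS* selection path from s (at OR nodes follow the tie-break-least successor minimizing c + p; at AND nodes follow the tie-break-least successor minimizing c + d) belongs to the AO* greedy solution base G0 rooted at s (which includes, at each internal OR node, its tie-break-least successor minimizing c + p, and all successors at AND nodes). In particular, the leaf selected by PNS* for expansion is a leaf of the solution base G0 selected by AO*. -/

import Mathlib

/-!
At an OR node PNS* makes exactly the choice AO* makes, and at an AND node it picks one of the
successors, all of which AO* includes; so each PNS* step stays inside the greedy base rooted at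
the current node, and greedy bases compose transitively. The values of `p` and `d` only fix which
successor is chosen, never whether it lies in the base.
-/

open scoped ENNReal

/-- A node of an AND/OR graph is labeled either OR or AND. -/
inductive NodeKind : Type
  | orN
  | andN
deriving DecidableEq

/-- A leaf is a solvable terminal, an unsolvable terminal, or a non-terminal leaf. -/
inductive LeafKind : Type
  | solv
  | unsolv
  | nonterm
deriving DecidableEq

/-- The combination rule `Ψ ∈ {sum, max}`. -/
inductive CombRule : Type
  | sum
  | max

/-- A finite acyclic AND/OR graph on a node type `V`: a successor function
(`succ n = ∅` means `n` is a leaf), an OR/AND label on each node, a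
terminal/non-terminal designation for leaves, edge costs in `ℝ≥0∞`, and
well-foundedness of the successor relation (no directed cycles). -/
structure AOGraph (V : Type) where
  succ : V → Finset V
  kind : V → NodeKind
  leafKind : V → LeafKind
  cost : V → V → ℝ≥0∞
  acyclic : WellFounded (fun a b : V => a ∈ succ b)

/-- Combining the values of the successors by `Ψ`. -/
noncomputable def comb {V : Type} (Ψ : CombRule) (s : Finset V) (f : V → ℝ≥0∞) : ℝ≥0∞ :=
  match Ψ with
  | .sum => ∑ x ∈ s, f x
  | .max => s.sup f

/-- `p` is the proof-cost function of `G` with heuristic `h` and rule `Ψ`. -/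
def IsProofCost {V : Type} (G : AOGraph V) (h : V → ℝ≥0∞) (Ψ : CombRule)
    (p : V → ℝ≥0∞) : Prop :=
  ∀ n : V,
    (G.succ n = ∅ →
      p n = (match G.leafKind n with
             | .solv => 0
             | .unsolv => ⊤
             | .nonterm => h n)) ∧
    (G.succ n ≠ ∅ →
      p n = (match G.kind n with
             | .orN => (G.succ n).inf (fun m => G.cost n m + p m)
             | .andN => comb Ψ (G.succ n) (fun m => G.cost n m + p m)))

/-- `d` is the disproof-cost function of `G` with heuristic `h̄` and rule `Ψ`. -/
def IsDisproofCost {V : Type} (G : AOGraph V) (hb : V → ℝ≥0∞) (Ψ : CombRule)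
    (d : V → ℝ≥0∞) : Prop :=
  ∀ n : V,
    (G.succ n = ∅ →
      d n = (match G.leafKind n with
             | .solv => ⊤
             | .unsolv => 0
             | .nonterm => hb n)) ∧
    (G.succ n ≠ ∅ →
      d n = (match G.kind n with
             | .orN => comb Ψ (G.succ n) (fun m => G.cost n m + d m)
             | .andN => (G.succ n).inf (fun m => G.cost n m + d m)))

/-- `m` is the tie-break-least element of `s` minimizing `f`: it belongs to
`s`, minimizes `f` over `s`, and is least (in the tie-breaking linear order)
among the minimizers. -/
def TieBreakMin {V : Type} [LinearOrder V] (s : Finset V) (f : V → ℝ≥0∞) (m : V) : Prop :=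
  m ∈ s ∧ (∀ x ∈ s, f m ≤ f x) ∧ (∀ x ∈ s, f x = f m → m ≤ x)

/-- `IsPNSPath G p d s l`: `l` is the PNS* selection path from `s`, i.e. the
sequence `s = n₀, n₁, …, n_k` where `n_{i+1}` is the tie-break-least successor
of `n_i` minimizing `c(n_i,·) + p ·` if `n_i` is an internal OR node and the
tie-break-least successor minimizing `c(n_i,·) + d ·` if `n_i` is an internal
AND node, terminating at a leaf `n_k`. -/
inductive IsPNSPath {V : Type} [LinearOrder V] (G : AOGraph V) (p d : V → ℝ≥0∞) :
    V → List V → Prop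
  | leaf (n : V) (hleaf : G.succ n = ∅) : IsPNSPath G p d n [n]
  | stepOr (n m : V) (l : List V) (hne : G.succ n ≠ ∅) (hk : G.kind n = .orN)
      (hm : TieBreakMin (G.succ n) (fun x => G.cost n x + p x) m)
      (hrec : IsPNSPath G p d m l) : IsPNSPath G p d n (n :: l)
  | stepAnd (n m : V) (l : List V) (hne : G.succ n ≠ ∅) (hk : G.kind n = .andN)
      (hm : TieBreakMin (G.succ n) (fun x => G.cost n x + d x) m)
      (hrec : IsPNSPath G p d m l) : IsPNSPath G p d n (n :: l)

/-- Membership in the AO* greedy solution base `G₀` rooted at `s`: the set of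
nodes generated from `s` by including, at each internal OR node, its
tie-break-least successor minimizing `c + p`, and all successors at each
internal AND node. -/
inductive InGreedyBase {V : Type} [LinearOrder V] (G : AOGraph V) (p : V → ℝ≥0∞)
    (s : V) : V → Prop
  | root : InGreedyBase G p s s
  | orStep (n m : V) (hn : InGreedyBase G p s n) (hne : G.succ n ≠ ∅)
      (hk : G.kind n = .orN)
      (hm : TieBreakMin (G.succ n) (fun x => G.cost n x + p x) m) :
      InGreedyBase G p s m
  | andStep (n m : V) (hn : InGreedyBase G p s n) (hne : G.succ n ≠ ∅)
      (hk : G.kind n = .andN) (hm : m ∈ G.succ n) :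
      InGreedyBase G p s m

namespace InGreedyBase

variable {V : Type} [LinearOrder V] {G : AOGraph V} {p : V → ℝ≥0∞}

theorem trans {s a x : V} (hsa : InGreedyBase G p s a) (hax : InGreedyBase G p a x) :
    InGreedyBase G p s x := by
  induction hax with
  | root => exact hsa
  | orStep n m _ hne hk hm ih => exact .orStep n m ih hne hk hm
  | andStep n m _ hne hk hm ih => exact .andStep n m ih hne hk hm

end InGreedyBase

namespace IsPNSPath

variable {V : Type} [LinearOrder V] {G : AOGraph V} {p d : V → ℝ≥0∞} {s : V} {l : List V}

theorem ne_nil (hl : IsPNSPath G p d s l) : l ≠ [] := by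
  cases hl <;> simp

theorem inGreedyBase_of_mem (hl : IsPNSPath G p d s l) {x : V} (hx : x ∈ l) :
    InGreedyBase G p s x := by
  induction hl with
  | leaf _ _ =>
    rw [List.mem_singleton.1 hx]
    exact .root
  | stepOr n m _ hne hk hm _ ih =>
    rcases List.mem_cons.1 hx with rfl | hx
    · exact .root
    · exact (InGreedyBase.orStep n m .root hne hk hm).trans (ih hx)
  | stepAnd n m _ hne hk hm _ ih =>
    rcases List.mem_cons.1 hx with rfl | hx
    · exact .root
    · exact (InGreedyBase.andStep n m .root hne hk hm.1).trans (ih hx)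

theorem succ_eq_empty_of_getLast? (hl : IsPNSPath G p d s l) {x : V}
    (hx : l.getLast? = some x) : G.succ x = ∅ := by
  induction hl with
  | leaf _ hleaf =>
    rw [← Option.some_inj.1 hx]
    exact hleaf
  | stepOr _ _ _ _ _ _ hrec ih | stepAnd _ _ _ _ _ _ hrec ih =>
    obtain ⟨a, t, rfl⟩ := List.exists_cons_of_ne_nil hrec.ne_nil
    rw [List.getLast?_cons_cons] at hx
    exact ih hx

end IsPNSPath

theorem pns_path_subset_ao_greedy_base_general {V : Type} [LinearOrder V]
    (G : AOGraph V) (p d : V → ℝ≥0∞)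
    (s : V) (l : List V) (hl : IsPNSPath G p d s l) :
    (∀ n ∈ l, InGreedyBase G p s n) ∧
    (∀ x : V, l.getLast? = some x → G.succ x = ∅ ∧ InGreedyBase G p s x) :=
  ⟨fun _ hn => hl.inGreedyBase_of_mem hn,
    fun _ hx => ⟨hl.succ_eq_empty_of_getLast? hx,
      hl.inGreedyBase_of_mem (List.mem_of_getLast? hx)⟩⟩

/-- Let `G'` be a finite acyclic AND/OR graph with root `s`,
cost functions `p, d` computed (with rule `Ψ`) from the same heuristic `h` used
by AO*, and a fixed linear order on nodes for tie-breaking. Then every node on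
the PNS* selection path from `s` belongs to the AO* greedy solution base `G₀`
rooted at `s`; in particular the leaf selected by PNS* for expansion (the last
node of the path) is a leaf of `G₀`. -/
theorem pns_path_subset_ao_greedy_base {V : Type} [Fintype V] [LinearOrder V]
    (G : AOGraph V) (h hb : V → ℝ≥0∞) (Ψ : CombRule) (p d : V → ℝ≥0∞)
    (hp : IsProofCost G h Ψ p) (hd : IsDisproofCost G hb Ψ d)
    (s : V) (l : List V) (hl : IsPNSPath G p d s l) :
    (∀ n ∈ l, InGreedyBase G p s n) ∧
    (∀ x : V, l.getLast? = some x → G.succ x = ∅ ∧ InGreedyBase G p s x) :=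
  pns_path_subset_ao_greedy_base_general G p d s l hl
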